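/- arXiv:1712.08331 — 2 statements merged into one kernel-verified Lean document; each statement's English description precedes it below -/
import Mathlib

section
/- Let $q$ be a prime power, $\ell$ a prime dividing $q-1$, with $\ell$ odd or $q \equiv 1 \pmod 4$, and let $\ell^b \| q-1$. Let $\ell^s \le m$ with $s \ge 1$ maximal such that $\ell^s \le m$. Then $v_\ell\big(\prod_{i=1}^m (q^i-1)\big) - v_\ell\big((q^{\ell^s}-1) \cdot \prod_{i=1}^{m-\ell^s}(q^i-1)\big) \ge b(\ell^s - 1)$. -/
private lemma val_qpow_sub_one (q ℓ : ℕ) (hq2 : 2 ≤ q) (hℓ : ℓ.Prime)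
    (hdvd : ℓ ∣ q - 1) (hcase : Odd ℓ ∨ q % 4 = 1) {n : ℕ} (hn : n ≠ 0) :
    padicValNat ℓ (q ^ n - 1) = padicValNat ℓ (q - 1) + padicValNat ℓ n := by
  haveI : Fact ℓ.Prime := ⟨hℓ⟩
  have hx : ¬ℓ ∣ q := by
    intro h
    have h1 : ℓ ∣ q - (q - 1) := Nat.dvd_sub h hdvd
    have h2 : q - (q - 1) = 1 := by omega
    rw [h2] at h1
    have := Nat.le_of_dvd one_pos h1
    have := hℓ.two_le
    omega
  have h1q : 1 < q := hq2
  by_cases hodd : Odd ℓ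
  · have := padicValNat.pow_sub_pow (p := ℓ) hodd h1q hdvd hx hn
    simpa using this
  · have hℓ2 : ℓ = 2 := (Nat.Prime.even_iff hℓ).mp (Nat.not_odd_iff_even.mp hodd)
    subst hℓ2
    have h4 : q % 4 = 1 := hcase.resolve_left hodd
    by_cases hne : Even n
    · have key := padicValNat.pow_two_sub_pow (x := q) (y := 1) h1q (by simpa using hdvd)
        hx hn hne
      simp only [one_pow] at key
      have hv1 : padicValNat 2 (q + 1) = 1 := by
        obtain ⟨k, hk⟩ : ∃ k, q = 4 * k + 1 := ⟨q / 4, by omega⟩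
        have h5 : q + 1 = 2 * (2 * k + 1) := by omega
        rw [h5, padicValNat.mul (by norm_num) (by omega), padicValNat.self (by norm_num),
          padicValNat.eq_zero_of_not_dvd (by omega)]
      omega
    · -- n odd
      have hnodd : n % 2 = 1 := Nat.odd_iff.mp (Nat.not_even_iff_odd.mp hne)
      have hqodd : q % 2 = 1 := by omega
      have hgeom : q ^ n - 1 = (q - 1) * ∑ i ∈ Finset.range n, q ^ i := by
        have h1 : (1:ℕ) ≤ q ^ n := Nat.one_le_pow _ _ (by omega)
        zify [h1, (by omega : (1:ℕ) ≤ q)]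
        have := geom_sum_mul (x := (q : ℤ)) n
        linarith [this]
      have hSodd : ¬ 2 ∣ ∑ i ∈ Finset.range n, q ^ i := by
        have hmod : (∑ i ∈ Finset.range n, q ^ i) % 2 = 1 := by
          rw [Finset.sum_nat_mod]
          have h6 : ∀ i ∈ Finset.range n, q ^ i % 2 = 1 := by
            intro i _
            simp [Nat.pow_mod, hqodd]
          rw [Finset.sum_congr rfl h6]
          simp only [Finset.sum_const, Finset.card_range, smul_eq_mul, mul_one]
          omega
        omega
      have hS0 : (∑ i ∈ Finset.range n, q ^ i) ≠ 0 := by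
        intro h; rw [h] at hSodd; exact hSodd (dvd_zero 2)
      have hn2 : ¬ 2 ∣ n := by omega
      rw [hgeom, padicValNat.mul (by omega) hS0, padicValNat.eq_zero_of_not_dvd hSodd,
        padicValNat.eq_zero_of_not_dvd hn2]

theorem stmt_5 (q ℓ m b s : ℕ) (hq : IsPrimePow q) (hℓ : ℓ.Prime)
    (hdvd : ℓ ∣ q - 1) (hcase : Odd ℓ ∨ q % 4 = 1)
    (hb : b = (q - 1).factorization ℓ) (hs : 1 ≤ s)
    (hle : ℓ ^ s ≤ m) (hmax : m < ℓ ^ (s + 1)) :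
    (∏ i ∈ Finset.range m, (q ^ (i + 1) - 1)).factorization ℓ -
      ((q ^ (ℓ ^ s) - 1) * ∏ i ∈ Finset.range (m - ℓ ^ s), (q ^ (i + 1) - 1)).factorization ℓ ≥
      b * (ℓ ^ s - 1) := by
  haveI : Fact ℓ.Prime := ⟨hℓ⟩
  have hq2 : 2 ≤ q := hq.two_le
  set d := ℓ ^ s with hd
  have hd1 : 1 ≤ d := Nat.one_le_pow _ _ hℓ.pos
  have hne : ∀ i : ℕ, q ^ (i + 1) - 1 ≠ 0 := by
    intro i
    have : 2 ≤ q ^ (i + 1) := le_trans hq2 (Nat.le_self_pow (by omega) q)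
    omega
  have hval : ∀ i : ℕ, (q ^ (i + 1) - 1).factorization ℓ = b + padicValNat ℓ (i + 1) := by
    intro i
    rw [Nat.factorization_def _ hℓ, val_qpow_sub_one q ℓ hq2 hℓ hdvd hcase (by omega),
      hb, Nat.factorization_def _ hℓ]
  have hprod : ∀ M : ℕ, (∏ i ∈ Finset.range M, (q ^ (i + 1) - 1)).factorization ℓ =
      M * b + ∑ i ∈ Finset.range M, padicValNat ℓ (i + 1) := by
    intro M
    rw [Nat.factorization_prod (fun i _ => hne i), Finset.sum_apply']
    rw [Finset.sum_congr rfl (fun i _ => hval i), Finset.sum_add_distrib]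
    simp [mul_comm]
  have hT : ∑ i ∈ Finset.range m, padicValNat ℓ (i + 1) ≥
      s + ∑ i ∈ Finset.range (m - d), padicValNat ℓ (i + 1) := by
    have hm : m - d + d = m := by omega
    have hsplit := Finset.sum_range_add (fun i => padicValNat ℓ (i + 1)) (m - d) d
    rw [hm] at hsplit
    rw [hsplit]
    have hbig : s ≤ ∑ x ∈ Finset.range d, padicValNat ℓ ((m - d) + x + 1) := by
      set k := d * (m / d) with hkdef
      have hk1 : d ≤ k := Nat.le_mul_of_pos_right d (Nat.div_pos hle hd1)
      have hk2 : k ≤ m := Nat.mul_div_le m d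
      have hk3 : m < k + d := by
        have h7 := Nat.mod_lt m (show 0 < d by omega)
        have h8 := Nat.div_add_mod m d
        omega
      have hi0 : k - (m - d) - 1 ∈ Finset.range d := Finset.mem_range.mpr (by omega)
      have hkk : (m - d) + (k - (m - d) - 1) + 1 = k := by omega
      have hvk : s ≤ padicValNat ℓ ((m - d) + (k - (m - d) - 1) + 1) := by
        rw [hkk, ← Nat.factorization_def _ hℓ]
        exact (Nat.Prime.pow_dvd_iff_le_factorization hℓ (by omega)).mp ⟨m / d, rfl⟩
      exact le_trans hvk (Finset.single_le_sum
        (f := fun x => padicValNat ℓ ((m - d) + x + 1)) (fun i _ => Nat.zero_le _) hi0)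
    omega
  have hA := hprod m
  have hB := hprod (m - d)
  have hval_d : (q ^ d - 1).factorization ℓ = b + s := by
    rw [Nat.factorization_def _ hℓ, val_qpow_sub_one q ℓ hq2 hℓ hdvd hcase (by omega),
      hb, Nat.factorization_def _ hℓ, hd, padicValNat.prime_pow]
  have hBne : (q ^ d - 1) ≠ 0 := by
    have := hne (d - 1)
    rwa [Nat.sub_add_cancel hd1] at this
  have hPne : (∏ i ∈ Finset.range (m - d), (q ^ (i + 1) - 1)) ≠ 0 :=
    Finset.prod_ne_zero_iff.mpr (fun i _ => hne i)
  rw [Nat.factorization_mul hBne hPne, Finsupp.add_apply, hval_d, hA, hB, ge_iff_le]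
  apply Nat.le_sub_of_add_le
  have h1 : (m - d) + (d - 1) + 1 = m := by omega
  have h2 : m * b = (m - d) * b + (d - 1) * b + b := by
    calc m * b = ((m - d) + (d - 1) + 1) * b := by rw [h1]
    _ = (m - d) * b + (d - 1) * b + b := by ring
  have h3 : b * (d - 1) = (d - 1) * b := mul_comm _ _
  rw [h2, h3]
  linarith [hT]
end

section
/- Let $q$ be a prime power, $\ell$ a prime dividing $q-1$, and $m = \sum_{i=0}^s a_i \ell^i$ the $\ell$-adic expansion of $m$. Then $v_\ell\big(\prod_{i=1}^m (q^i-1)\big) = \sum_{i=0}^s a_i \cdot v_\ell\big(\prod_{j=1}^{\ell^i}(q^j-1)\big)$; that is, the subgroup $\prod_{i=0}^s \mathrm{GL}_{\ell^i}(q)^{a_i}$ of $\mathrm{GL}_m(q)$ has order with the same $\ell$-part as $|\mathrm{GL}_m(q)|$, hence contains a Sylow $\ell$-subgroup. -/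
/-!
Since `ℓ ∣ q - 1`, the valuation `v_ℓ(q^i - 1)` depends only on `v_ℓ(i)`: writing `i = ℓ^t u` with
`ℓ ∤ u` and `Q = q^(ℓ^t) ≡ 1 [MOD ℓ]`, the quotient `(Q^u - 1)/(Q - 1) = 1 + Q + ⋯ + Q^(u-1) ≡ u`
is prime to `ℓ`. So both sides are sums `∑_{i ≤ n} h(v_ℓ(i))` for one function `h`, and any such
sum is additive along the base-`ℓ` digits of `n`: among `1, …, ℓn + a` (with `a < ℓ`) the last `a`
numbers and all the non-multiples of `ℓ` have valuation `0`, while the multiples `ℓj` contribute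
the same kind of sum up to `n`, for the shifted function `h(· + 1)`.
-/

open Finset

namespace Nat

variable {ℓ : ℕ}

theorem factorization_pow_sub_one_of_not_dvd {Q u : ℕ} (hQ : 1 < Q)
    (hℓQ : ℓ ∣ Q - 1) (hu : ¬ℓ ∣ u) :
    (Q ^ u - 1).factorization ℓ = (Q - 1).factorization ℓ := by
  have hgeom : ∑ i ∈ range u, Q ^ i ≡ u [MOD ℓ] := by
    have hQ1 : Q ≡ 1 [MOD ℓ] := ((modEq_iff_dvd' hQ.le).mpr hℓQ).symm
    simpa using ModEq.sum (s := range u) fun i _ => hQ1.pow i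
  have hS : ¬ℓ ∣ ∑ i ∈ range u, Q ^ i := (hgeom.dvd_iff dvd_rfl).not.mpr hu
  have hS0 : ∑ i ∈ range u, Q ^ i ≠ 0 := fun h => hS (h ▸ dvd_zero ℓ)
  rw [← geom_sum_mul_of_one_le hQ.le, factorization_mul hS0 (by omega), Finsupp.add_apply,
    factorization_eq_zero_of_not_dvd hS, zero_add]

theorem factorization_pow_sub_one (hℓ : ℓ.Prime) {q i : ℕ} (hq : 1 < q) (hℓq : ℓ ∣ q - 1)
    (hi : i ≠ 0) :
    (q ^ i - 1).factorization ℓ = (q ^ ℓ ^ i.factorization ℓ - 1).factorization ℓ := by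
  conv_lhs => rw [← ordProj_mul_ordCompl_eq_self i ℓ, pow_mul]
  exact factorization_pow_sub_one_of_not_dvd (one_lt_pow (pow_ne_zero _ hℓ.ne_zero) hq)
    (hℓq.trans (sub_one_dvd_pow_sub_one q _)) (not_dvd_ordCompl hℓ hi)

def valuationSum (ℓ : ℕ) (h : ℕ → ℕ) (n : ℕ) : ℕ :=
  ∑ i ∈ range n, h ((i + 1).factorization ℓ)

theorem valuationSum_mul_add (h : ℕ → ℕ) (n : ℕ) {a : ℕ} (ha : a < ℓ) :
    valuationSum ℓ h (ℓ * n + a) = valuationSum ℓ h (ℓ * n) + a * h 0 := by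
  induction a with
  | zero => simp
  | succ a ih =>
    have hndvd : ¬ℓ ∣ ℓ * n + a + 1 := by
      rw [add_assoc, Nat.dvd_add_right (dvd_mul_right ℓ n)]
      exact Nat.not_dvd_of_pos_of_lt (by omega) ha
    rw [← add_assoc, valuationSum, sum_range_succ, ← valuationSum, ih (by omega),
      factorization_eq_zero_of_not_dvd hndvd]
    ring

theorem valuationSum_mul (hℓ : ℓ.Prime) (h : ℕ → ℕ) (n : ℕ) :
    valuationSum ℓ h (ℓ * n) = (ℓ - 1) * n * h 0 + valuationSum ℓ (fun t => h (t + 1)) n := by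
  induction n with
  | zero => simp [valuationSum]
  | succ n ih =>
    have hℓ1 := hℓ.one_le
    have hsucc : ℓ * (n + 1) = ℓ * n + (ℓ - 1) + 1 := by
      rw [mul_add]
      omega
    have hv : (ℓ * (n + 1)).factorization ℓ = (n + 1).factorization ℓ + 1 := by
      rw [factorization_mul hℓ.ne_zero n.succ_ne_zero, Finsupp.add_apply, hℓ.factorization_self,
        add_comm]
    rw [hsucc, valuationSum, sum_range_succ, ← valuationSum, valuationSum_mul_add h n (by omega),
      ih, ← hsucc, hv, valuationSum, valuationSum, sum_range_succ]
    ring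

theorem ofDigits_eq_sum_getD_mul_pow (b : ℕ) (L : List ℕ) :
    ofDigits b L = ∑ k ∈ range L.length, L.getD k 0 * b ^ k := by
  induction L with
  | nil => simp
  | cons a L ih =>
    rw [List.length_cons, sum_range_succ', ofDigits_cons, ih, mul_sum]
    simp only [List.getD_cons_succ, List.getD_cons_zero, pow_zero, mul_one]
    rw [add_comm]
    exact congrArg (· + a) (sum_congr rfl fun _ _ => by ring)

theorem valuationSum_ofDigits (hℓ : ℓ.Prime) (L : List ℕ) (hL : ∀ a ∈ L, a < ℓ) (h : ℕ → ℕ) :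
    valuationSum ℓ h (ofDigits ℓ L) =
      ∑ k ∈ range L.length, L.getD k 0 * valuationSum ℓ h (ℓ ^ k) := by
  induction L generalizing h with
  | nil => simp [valuationSum]
  | cons a L ih =>
    have hpow (k : ℕ) : valuationSum ℓ h (ℓ ^ (k + 1)) =
        (ℓ - 1) * ℓ ^ k * h 0 + valuationSum ℓ (fun t => h (t + 1)) (ℓ ^ k) := by
      rw [pow_succ', valuationSum_mul hℓ]
    rw [ofDigits_cons, add_comm, valuationSum_mul_add h _ (hL a List.mem_cons_self),
      valuationSum_mul hℓ, ih (fun b hb => hL b (List.mem_cons_of_mem a hb)), List.length_cons,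
      sum_range_succ', ofDigits_eq_sum_getD_mul_pow]
    have hone : valuationSum ℓ h (ℓ ^ 0) = h 0 := by simp [valuationSum]
    simp only [List.getD_cons_succ, List.getD_cons_zero, hpow, hone, mul_add, sum_add_distrib,
      mul_sum, sum_mul]
    congr 2
    exact sum_congr rfl fun _ _ => by ring

theorem factorization_prod_pow_sub_one (hℓ : ℓ.Prime) {q : ℕ} (hq : 1 < q) (hℓq : ℓ ∣ q - 1)
    (n : ℕ) :
    (∏ i ∈ range n, (q ^ (i + 1) - 1)).factorization ℓ =
      valuationSum ℓ (fun t => (q ^ ℓ ^ t - 1).factorization ℓ) n := by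
  have hne (i : ℕ) : q ^ (i + 1) - 1 ≠ 0 := (Nat.sub_pos_of_lt (one_lt_pow i.succ_ne_zero hq)).ne'
  rw [factorization_prod fun i _ => hne i, Finsupp.finsetSum_apply, valuationSum]
  exact sum_congr rfl fun i _ => factorization_pow_sub_one hℓ hq hℓq i.succ_ne_zero

end Nat

theorem stmt_6 (q ℓ m : ℕ) (hq : IsPrimePow q) (hℓ : ℓ.Prime) (hdvd : ℓ ∣ q - 1) :
    (∏ i ∈ Finset.range m, (q ^ (i + 1) - 1)).factorization ℓ =
      ∑ i ∈ Finset.range (Nat.digits ℓ m).length,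
        (Nat.digits ℓ m).getD i 0 *
          (∏ j ∈ Finset.range (ℓ ^ i), (q ^ (j + 1) - 1)).factorization ℓ := by
  simp only [Nat.factorization_prod_pow_sub_one hℓ hq.one_lt hdvd]
  conv_lhs => rw [← Nat.ofDigits_digits ℓ m]
  exact Nat.valuationSum_ofDigits hℓ _ (fun _ => Nat.digits_lt_base hℓ.one_lt) _
end
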